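/- Let H be a real Hilbert space with orthogonal decomposition of a finite-dimensional subspace P = M ⊕ B where B = span{b₁,…,bₙ} with b₁,…,bₙ pairwise orthogonal and nonzero, and M ⊥ B. Let f₁,…,fₙ : M → ℝ be bounded linear functionals with Riesz representatives φᵢ ∈ M (so ⟪φᵢ, q⟫ = fᵢ(q) for all q ∈ M). Define M' = { q + Σᵢ fᵢ(q) bᵢ : q ∈ M }. Then the vectors ψᵢ := φᵢ − bᵢ/‖bᵢ‖² (i = 1,…,n) are linearly independent, lie in P, and satisfy ⟪ψᵢ, p⟩ = 0 for every p ∈ M'. -/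

import Mathlib

open scoped RealInnerProductSpace

/-! Since `φᵢ ∈ M ⊥ B`, pairing `ψᵢ` with `bⱼ` gives `-δᵢⱼ`. This biorthogonality makes the `ψᵢ`
independent, and for `q ∈ M` it turns `⟪ψᵢ, q + ∑ⱼ fⱼ(q) bⱼ⟫` into `fᵢ(q) - fᵢ(q)`. -/

section

variable {H : Type*} [NormedAddCommGroup H] [InnerProductSpace ℝ H] {ι : Type*}

theorem linearIndependent_of_inner_eq_ite [DecidableEq ι] {v w : ι → H} {c : ℝ} (hc : c ≠ 0)
    (h : ∀ i j, ⟪v i, w j⟫ = if i = j then c else 0) : LinearIndependent ℝ v := by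
  rw [linearIndependent_iff']
  intro s g hg i hi
  have hpair := congrArg (⟪·, w i⟫) hg
  simp only [sum_inner, real_inner_smul_left, h, mul_ite, mul_zero, Finset.sum_ite_eq',
    if_pos hi, inner_zero_left] at hpair
  exact (mul_eq_zero.mp hpair).resolve_right hc

theorem inner_sub_inv_norm_sq_smul_eq_ite [DecidableEq ι] {b : ι → H}
    (hborth : ∀ i j, i ≠ j → ⟪b i, b j⟫ = 0) {i j : ι} (hb : b i ≠ 0) {φ : H}
    (hφ : ⟪φ, b j⟫ = 0) :
    ⟪φ - (1 / ‖b i‖ ^ 2) • b i, b j⟫ = if i = j then -1 else 0 := by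
  rw [inner_sub_left, real_inner_smul_left, hφ]
  split_ifs with hij
  · subst hij
    rw [real_inner_self_eq_norm_sq]
    field_simp
    ring
  · rw [hborth i j hij]
    ring

end

theorem orthogonal_complement_modified_general
    {H : Type*} [NormedAddCommGroup H] [InnerProductSpace ℝ H]
    (M : Submodule ℝ H) {n : ℕ} (b : Fin n → H)
    (hbne : ∀ i, b i ≠ 0)
    (hborth : ∀ i j, i ≠ j → ⟪b i, b j⟫ = 0)
    (hMorth : ∀ i, ∀ q ∈ M, ⟪q, b i⟫ = 0)
    (f : Fin n → H → ℝ) (φ : Fin n → H)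
    (hφmem : ∀ i, φ i ∈ M)
    (hRiesz : ∀ i, ∀ q ∈ M, ⟪φ i, q⟫ = f i q) :
    LinearIndependent ℝ (fun i => φ i - (1 / ‖b i‖ ^ 2) • b i) ∧
      (∀ i, φ i - (1 / ‖b i‖ ^ 2) • b i ∈ M ⊔ Submodule.span ℝ (Set.range b)) ∧
      (∀ i, ∀ p ∈ {x : H | ∃ q ∈ M, x = q + ∑ j, f j q • b j},
        ⟪φ i - (1 / ‖b i‖ ^ 2) • b i, p⟫ = 0) := by
  have hψb : ∀ i j, ⟪φ i - (1 / ‖b i‖ ^ 2) • b i, b j⟫ = if i = j then -1 else 0 :=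
    fun i j => inner_sub_inv_norm_sq_smul_eq_ite hborth (hbne i) (hMorth j _ (hφmem i))
  refine ⟨linearIndependent_of_inner_eq_ite (neg_ne_zero.mpr one_ne_zero) hψb, fun i => ?_, ?_⟩
  · exact Submodule.sub_mem _ (Submodule.mem_sup_left (hφmem i))
      (Submodule.mem_sup_right (Submodule.smul_mem _ _ (Submodule.subset_span ⟨i, rfl⟩)))
  · rintro i _ ⟨q, hq, rfl⟩
    have hψq : ⟪φ i - (1 / ‖b i‖ ^ 2) • b i, q⟫ = f i q := by
      rw [inner_sub_left, real_inner_smul_left, hRiesz i q hq, real_inner_comm, hMorth i q hq,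
        mul_zero, sub_zero]
    simp only [inner_add_right, inner_sum, real_inner_smul_right, hψb, hψq, mul_ite, mul_neg,
      mul_one, mul_zero, Finset.sum_ite_eq, Finset.mem_univ, if_true, add_neg_cancel]

theorem orthogonal_complement_modified
    {H : Type*} [NormedAddCommGroup H] [InnerProductSpace ℝ H] [CompleteSpace H]
    (M : Submodule ℝ H) [FiniteDimensional ℝ M] {n : ℕ} (b : Fin n → H)
    (hbne : ∀ i, b i ≠ 0)
    (hborth : ∀ i j, i ≠ j → ⟪b i, b j⟫ = 0)
    (hMorth : ∀ i, ∀ q ∈ M, ⟪q, b i⟫ = 0)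
    (f : Fin n → H → ℝ) (φ : Fin n → H)
    (hφmem : ∀ i, φ i ∈ M)
    (hRiesz : ∀ i, ∀ q ∈ M, ⟪φ i, q⟫ = f i q) :
    LinearIndependent ℝ (fun i => φ i - (1 / ‖b i‖ ^ 2) • b i) ∧
      (∀ i, φ i - (1 / ‖b i‖ ^ 2) • b i ∈ M ⊔ Submodule.span ℝ (Set.range b)) ∧
      (∀ i, ∀ p ∈ {x : H | ∃ q ∈ M, x = q + ∑ j, f j q • b j},
        ⟪φ i - (1 / ‖b i‖ ^ 2) • b i, p⟫ = 0) :=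
  orthogonal_complement_modified_general M b hbne hborth hMorth f φ hφmem hRiesz
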